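/- Let τ > 0, D > 0, ρ > 0 be constants, L > 0, T > 0, and let s : [0,T] → (0,L) be twice continuously differentiable. Let c be twice continuously differentiable and J continuously differentiable on the region {(x,t) : 0 ≤ t ≤ T, s(t) ≤ x ≤ L}, and suppose on this region: (i) Cattaneo's law J + τ·∂J/∂t = −D·∂c/∂x; (ii) the continuity equation ∂c/∂t = −∂J/∂x; and (iii) the flux relation 2·J(s(t),t) = ṡ(t)·( ρ + 2·c(s(t),t) ) for all t ∈ [0,T]. Then for all t ∈ [0,T]: −2D·(∂c/∂x)(s(t),t) = ṡ(t)·( ρ + 2·c(s(t),t) ) + τ·[ s̈(t)·( ρ + 2·c(s(t),t) ) + 2·ṡ(t)²·(∂c/∂x)(s(t),t) + 4·ṡ(t)·(∂c/∂t)(s(t),t) ]. -/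

import Mathlib

/-!
Both sides of the flux relation are differentiable functions of `t` along the moving boundary
`t ↦ (s t, t)`, and they agree on `[0, T]`, so their total time derivatives agree there. The
chain rule expresses these derivatives through the partial derivatives of `J` and `c` at the
boundary. The continuity equation replaces `∂J/∂x` by `-∂c/∂t`, and Cattaneo's law
`J + τ ∂J/∂t = -D ∂c/∂x` then eliminates `J` and `∂J/∂t` between the flux relation and its
time derivative.
-/

/-- Partial derivative with respect to the first (space) variable. -/
noncomputable def pderivX (f : ℝ × ℝ → ℝ) (p : ℝ × ℝ) : ℝ :=
  deriv (fun x => f (x, p.2)) p.1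

/-- Partial derivative with respect to the second (time) variable. -/
noncomputable def pderivT (f : ℝ × ℝ → ℝ) (p : ℝ × ℝ) : ℝ :=
  deriv (fun t => f (p.1, t)) p.2

section PartialDerivatives

variable {f : ℝ × ℝ → ℝ} {p : ℝ × ℝ}

theorem DifferentiableAt.pderivX_eq_fderiv_apply (hf : DifferentiableAt ℝ f p) :
    pderivX f p = fderiv ℝ f p (1, 0) :=
  (hf.hasFDerivAt.comp_hasDerivAt_of_eq p.1
    ((hasDerivAt_id p.1).prodMk (hasDerivAt_const p.1 p.2)) rfl).deriv

theorem DifferentiableAt.pderivT_eq_fderiv_apply (hf : DifferentiableAt ℝ f p) :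
    pderivT f p = fderiv ℝ f p (0, 1) :=
  (hf.hasFDerivAt.comp_hasDerivAt_of_eq p.2
    ((hasDerivAt_const p.2 p.1).prodMk (hasDerivAt_id p.2)) rfl).deriv

theorem DifferentiableAt.fderiv_apply_eq_pderiv (hf : DifferentiableAt ℝ f p) (a b : ℝ) :
    fderiv ℝ f p (a, b) = a * pderivX f p + b * pderivT f p := by
  have hab : ((a, b) : ℝ × ℝ) = a • ((1 : ℝ), (0 : ℝ)) + b • ((0 : ℝ), (1 : ℝ)) := by
    simp
  rw [hf.pderivX_eq_fderiv_apply, hf.pderivT_eq_fderiv_apply, hab, map_add, map_smul, map_smul,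
    smul_eq_mul, smul_eq_mul]

theorem DifferentiableAt.hasDerivWithinAt_comp_curve {x y : ℝ → ℝ} {x' y' t : ℝ} {S : Set ℝ}
    (hf : DifferentiableAt ℝ f (x t, y t)) (hx : HasDerivWithinAt x x' S t)
    (hy : HasDerivWithinAt y y' S t) :
    HasDerivWithinAt (fun u => f (x u, y u))
      (x' * pderivX f (x t, y t) + y' * pderivT f (x t, y t)) S t := by
  rw [← hf.fderiv_apply_eq_pderiv]
  exact hf.hasFDerivAt.comp_hasDerivWithinAt_of_eq t (hx.prodMk hy) rfl

end PartialDerivatives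

theorem free_boundary_condition_from_flux_relation (τ D ρ L T : ℝ)
    (s s' s'' : ℝ → ℝ) (c J : ℝ × ℝ → ℝ) (U : Set (ℝ × ℝ))
    (hT : 0 < T)
    (hrange : ∀ t ∈ Set.Icc (0 : ℝ) T, s t ∈ Set.Ioo 0 L)
    (hs' : ∀ t ∈ Set.Icc (0 : ℝ) T, HasDerivWithinAt s (s' t) (Set.Icc 0 T) t)
    (hs'' : ∀ t ∈ Set.Icc (0 : ℝ) T, HasDerivWithinAt s' (s'' t) (Set.Icc 0 T) t)
    (hU : IsOpen U)
    (hUR : {p : ℝ × ℝ | 0 ≤ p.2 ∧ p.2 ≤ T ∧ s p.2 ≤ p.1 ∧ p.1 ≤ L} ⊆ U)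
    (hc : ContDiffOn ℝ 2 c U) (hJ : ContDiffOn ℝ 1 J U)
    (hcattaneo : ∀ p ∈ {p : ℝ × ℝ | 0 ≤ p.2 ∧ p.2 ≤ T ∧ s p.2 ≤ p.1 ∧ p.1 ≤ L},
      J p + τ * pderivT J p = -D * pderivX c p)
    (hcontinuity : ∀ p ∈ {p : ℝ × ℝ | 0 ≤ p.2 ∧ p.2 ≤ T ∧ s p.2 ≤ p.1 ∧ p.1 ≤ L},
      pderivT c p = -pderivX J p)
    (hflux : ∀ t ∈ Set.Icc (0 : ℝ) T, 2 * J (s t, t) = s' t * (ρ + 2 * c (s t, t))) :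
    ∀ t ∈ Set.Icc (0 : ℝ) T,
      -2 * D * pderivX c (s t, t)
        = s' t * (ρ + 2 * c (s t, t))
          + τ * (s'' t * (ρ + 2 * c (s t, t))
            + 2 * (s' t) ^ 2 * pderivX c (s t, t)
            + 4 * s' t * pderivT c (s t, t)) := by
  intro t ht
  have hboundary : (s t, t) ∈ {p : ℝ × ℝ | 0 ≤ p.2 ∧ p.2 ≤ T ∧ s p.2 ≤ p.1 ∧ p.1 ≤ L} :=
    ⟨ht.1, ht.2, le_rfl, (hrange t ht).2.le⟩
  have hnhds : U ∈ nhds (s t, t) := hU.mem_nhds (hUR hboundary)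
  have hcd := (hc.differentiableOn (by norm_num)).differentiableAt hnhds
  have hJd := (hJ.differentiableOn (by norm_num)).differentiableAt hnhds
  have hid := hasDerivWithinAt_id t (Set.Icc 0 T)
  have hflux_lhs := (hJd.hasDerivWithinAt_comp_curve (hs' t ht) hid).const_mul 2
  have hflux_rhs := ((hs'' t ht).mul
    (((hcd.hasDerivWithinAt_comp_curve (hs' t ht) hid).const_mul 2).const_add ρ)).congr
    hflux (hflux t ht)
  have hflux_deriv := (uniqueDiffOn_Icc hT t ht).eq_deriv _ hflux_lhs hflux_rhs
  simp only [id, one_mul] at hflux_deriv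
  linear_combination -2 * hcattaneo _ hboundary + hflux t ht + τ * hflux_deriv
    - 2 * τ * s' t * hcontinuity _ hboundary
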